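/- The homogeneous polynomial P(x₀,x₁,y₁,x₂) = 3x₁y₁x₂ − (x₂ + x₁ + 3y₁)x₀² ∈ ℝ[x₀,x₁,y₁,x₂] is hyperbolic with respect to the direction (0,1,1,1), and P(x₀,x₁,−x₁,x₂) = 2x₀²x₁ − (x₀² + 3x₁²)x₂ for all x₀, x₁, x₂. -/

import Mathlib

open MvPolynomial Polynomial

/-- The one-variable complex polynomial `t ↦ P(x - t·e)` for `P ∈ ℝ[x₀,…,x_{N-1}]`. -/
noncomputable def linePoly {N : ℕ} (p : MvPolynomial (Fin N) ℝ) (x e : Fin N → ℝ) :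
    Polynomial ℂ :=
  MvPolynomial.aeval (fun i => Polynomial.C (x i : ℂ) - Polynomial.C (e i : ℂ) * Polynomial.X) p

/-- A real multivariate polynomial is hyperbolic with respect to `e` if `p(e) ≠ 0` and for
every real `x` the one-variable polynomial `t ↦ p(x - t e)` has only real zeros. -/
def Hyperbolic {N : ℕ} (p : MvPolynomial (Fin N) ℝ) (e : Fin N → ℝ) : Prop :=
  MvPolynomial.eval e p ≠ 0 ∧ ∀ x : Fin N → ℝ, ∀ z ∈ (linePoly p x e).roots, z.im = 0

/-- The lifted polynomial `P(x₀,x₁,y₁,x₂) = 3x₁y₁x₂ − (x₂ + x₁ + 3y₁)x₀²` (with the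
variables ordered as `x₀, x₁, y₁, x₂`). -/
noncomputable def liftedPoly : MvPolynomial (Fin 4) ℝ :=
  3 * X 1 * X 2 * X 3 - (X 3 + X 1 + 3 * X 2) * X 0 ^ 2

/-!
Along the line `x - t e`, the polynomial becomes the real cubic
`3(a-t)(b-t)(c-t) - s((c-t)+(a-t)+3(b-t))` with `s = x₀² ≥ 0`. Its discriminant is a polynomial
in `s` whose coefficients are sums of squares, so it is nonnegative. On the other hand, if a real
cubic `a t³ + b t² + c t + d` has a root `u + iv` with `v ≠ 0`, then the real and imaginary parts
of the root equation determine `c` and `d`, and substituting gives the discriminant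
`-4v²((3au+b)² + a²v²)² < 0`.
-/

namespace Cubic

theorem discr_eq_of_aeval_eq_zero (P : Cubic ℝ) {z : ℂ} (hz : aeval z P.toPoly = 0)
    (hv : z.im ≠ 0) :
    P.discr = -4 * z.im ^ 2 * ((3 * P.a * z.re + P.b) ^ 2 + P.a ^ 2 * z.im ^ 2) ^ 2 := by
  obtain ⟨a, b, c, d⟩ := P
  obtain ⟨u, v⟩ := z
  simp only [toPoly, pow_succ, pow_zero, one_mul, map_add, map_mul, Polynomial.aeval_C,
    Complex.coe_algebraMap, Polynomial.aeval_X, Complex.ext_iff, Complex.add_re, Complex.mul_re,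
    Complex.ofReal_re, Complex.mul_im, Complex.ofReal_im, zero_mul, sub_zero, Complex.zero_re,
    Complex.add_im, add_zero, Complex.zero_im] at hz
  obtain ⟨hre, him⟩ := hz
  have hc : c = -a * (3 * u ^ 2 - v ^ 2) - 2 * b * u := by
    apply mul_left_cancel₀ hv
    linear_combination him
  have hd : d = -a * (u ^ 3 - 3 * u * v ^ 2) - b * (u ^ 2 - v ^ 2) - c * u := by
    linear_combination hre
  subst hd hc
  simp only [discr]
  ring

theorem im_eq_zero_of_discr_nonneg {P : Cubic ℝ} (ha : P.a ≠ 0) (hP : 0 ≤ P.discr) {z : ℂ}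
    (hz : aeval z P.toPoly = 0) : z.im = 0 := by
  by_contra hv
  have hW : 0 < (3 * P.a * z.re + P.b) ^ 2 + P.a ^ 2 * z.im ^ 2 := by positivity
  have hneg : P.discr < 0 := by
    rw [P.discr_eq_of_aeval_eq_zero hz hv]
    nlinarith [mul_pos (sq_pos_of_ne_zero hv) (pow_pos hW 2)]
  exact hneg.not_ge hP

end Cubic

/-- `3(a-t)(b-t)(c-t) - s((c-t)+(a-t)+3(b-t))`, expanded in powers of `t`. -/
def lineCubic (a b c s : ℝ) : Cubic ℝ :=
  ⟨-3, 3 * (a + b + c), 5 * s - 3 * (a * b + b * c + c * a), 3 * a * b * c - s * (a + 3 * b + c)⟩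

theorem lineCubic_discr_nonneg (a b c : ℝ) {s : ℝ} (hs : 0 ≤ s) :
    0 ≤ (lineCubic a b c s).discr := by
  obtain ⟨r, rfl⟩ : ∃ r, s = r ^ 2 := ⟨√s, (Real.sq_sqrt hs).symm⟩
  have hsos : (lineCubic a b c (r ^ 2)).discr = 81 * ((a - b) * (b - c) * ((a - b) + (b - c))) ^ 2
      + r ^ 2 * (27 * (2 * (a - b) ^ 2 + 3 * (a - b) * (b - c) + 2 * (b - c) ^ 2) ^ 2
        + 297 * ((a - b) * (b - c)) ^ 2)
      + r ^ 4 * (558 * ((a - b) + (b - c)) ^ 2 + 234 * (a - b) ^ 2 + 234 * (b - c) ^ 2)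
      + 1500 * r ^ 6 := by
    simp only [lineCubic, Cubic.discr]
    ring
  rw [hsos]
  positivity

theorem linePoly_liftedPoly (x : Fin 4 → ℝ) :
    linePoly liftedPoly x ![0, 1, 1, 1] =
      (lineCubic (x 1) (x 2) (x 3) (x 0 ^ 2)).toPoly.map (algebraMap ℝ ℂ) := by
  refine Polynomial.funext fun t => ?_
  simp only [linePoly, liftedPoly, Fin.isValue, map_sub, map_mul, aeval_ofNat, MvPolynomial.aeval_X,
    Matrix.cons_val_one, Matrix.cons_val_zero, Complex.ofReal_one, map_one, one_mul, Matrix.cons_val,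
    map_add, map_pow, Complex.ofReal_zero, map_zero, zero_mul, sub_zero, Polynomial.eval_sub,
    Polynomial.eval_mul, Polynomial.eval_ofNat, Polynomial.eval_C, Polynomial.eval_X,
    Polynomial.eval_add, Polynomial.eval_pow, Cubic.toPoly, lineCubic, map_neg, neg_mul,
    Polynomial.map_add, Polynomial.map_neg, Polynomial.map_mul, Polynomial.map_C,
    Complex.coe_algebraMap, Complex.ofReal_ofNat, Polynomial.map_pow, Polynomial.map_X,
    Polynomial.map_sub, Polynomial.eval_neg]
  ring

theorem liftedPoly_isHomogeneous : liftedPoly.IsHomogeneous 3 := by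
  have hX (i : Fin 4) : (X i : MvPolynomial (Fin 4) ℝ).IsHomogeneous 1 := isHomogeneous_X _ _
  have h3 : (3 : MvPolynomial (Fin 4) ℝ).IsHomogeneous 0 := isHomogeneous_C _ (3 : ℝ)
  exact (((h3.mul (hX 1)).mul (hX 2)).mul (hX 3)).sub
    ((((hX 3).add (hX 1)).add (h3.mul (hX 2))).mul ((hX 0).pow 2))

/-- **Example (lift).** The homogeneous polynomial `P(x₀,x₁,y₁,x₂) = 3x₁y₁x₂ − (x₂+x₁+3y₁)x₀²`
is hyperbolic with respect to `(0,1,1,1)`, and `P(x₀,x₁,−x₁,x₂) = 2x₀²x₁ − (x₀²+3x₁²)x₂`. -/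
theorem liftedPoly_hyperbolic_and_restricts :
    liftedPoly.IsHomogeneous 3 ∧
    Hyperbolic liftedPoly ![0, 1, 1, 1] ∧
    ∀ x₀ x₁ x₂ : ℝ,
      MvPolynomial.eval ![x₀, x₁, -x₁, x₂] liftedPoly =
        2 * x₀ ^ 2 * x₁ - (x₀ ^ 2 + 3 * x₁ ^ 2) * x₂ := by
  refine ⟨liftedPoly_isHomogeneous, ⟨by simp [liftedPoly], fun x z hz => ?_⟩, fun x₀ x₁ x₂ => ?_⟩
  · rw [linePoly_liftedPoly] at hz
    have hroot : aeval z (lineCubic (x 1) (x 2) (x 3) (x 0 ^ 2)).toPoly = 0 := by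
      simpa [eval_map_algebraMap] using (mem_roots'.mp hz).2
    exact Cubic.im_eq_zero_of_discr_nonneg (by norm_num [lineCubic])
      (lineCubic_discr_nonneg _ _ _ (sq_nonneg _)) hroot
  · simp only [liftedPoly, Fin.isValue, map_sub, map_mul, MvPolynomial.eval_ofNat,
      MvPolynomial.eval_X, Matrix.cons_val_one, Matrix.cons_val_zero, Matrix.cons_val, map_add,
      map_pow]
    ring
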